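/- Let (X,d) be a proper geodesic metric space, L : [0,∞) → [0,∞) increasing, convex, superlinear with L(0)=0, H its Legendre transform, and g : X → ℝ Lipschitz. Then for every x ∈ X and every t > 0 at which the function t ↦ Q_t g(x) is differentiable, one has (d/dt) Q_t g(x) + H(|∇⁻ Q_t g|(x)) ≤ 0, where |∇⁻ Q_t g|(x) is the metric subgradient of the function y ↦ Q_t g(y) at x. -/

import Mathlib

open Metric Filter NNReal Topology

/-- Hopf–Lax (infimum-convolution) semigroup, with `Q_0 g = g`. -/
noncomputable def hopfLaxQ {X : Type*} [MetricSpace X] (L : ℝ → ℝ) (g : X → ℝ)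
    (t : ℝ) (x : X) : ℝ :=
  if t = 0 then g x else ⨅ y : X, (t * L (dist x y / t) + g y)

/-- The (one-dimensional) Legendre transform `H(w) = sup_{v ≥ 0} (w·v − L(v))`. -/
noncomputable def legendreH (L : ℝ → ℝ) (w : ℝ) : ℝ :=
  sSup ((fun v => w * v - L v) '' Set.Ici 0)

/-- The metric subgradient `|∇⁻ f|(x₀) = limsup_{x → x₀} [f(x₀) − f(x)]₊ / d(x,x₀)`. -/
noncomputable def metricSubgradient {X : Type*} [MetricSpace X] (f : X → ℝ) (x₀ : X) : ℝ :=
  limsup (fun x => max (f x₀ - f x) 0 / dist x x₀) (𝓝[≠] x₀)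

/-! Lipschitz `g` and superlinear `L` make the infima finite. Going from `x` to `z` at speed `v`
during time `h` and then following `Q_t g` from `z` gives
`Q_{t+h} g(x) ≤ h L(v) + Q_t g(z)`, by the triangle inequality and convexity of `L` (subadditivity
of its perspective). With `h = d(x,z)/v` and `D = ∂ₜ Q_t g(x)` this yields
`Q_t g(x) - Q_t g(z) ≤ d(x,z) (L(v) - D)/v + o(d(x,z))`, i.e. `v |∇⁻ Q_t g|(x) - L(v) ≤ -D` for
`v > 0`; for `v = 0` it is `D ≤ 0`, which holds since `t ↦ Q_t g(x)` is antitone.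
Taking the supremum over `v` gives the claim. -/

theorem exists_mul_le_add_of_superlinear {L : ℝ → ℝ} (hLnonneg : ∀ u, 0 ≤ u → 0 ≤ L u)
    (hLsuper : Tendsto (fun u => L u / u) atTop atTop) (K : ℝ≥0) :
    ∃ C, ∀ u, 0 ≤ u → K * u ≤ L u + C := by
  obtain ⟨M, hM⟩ := eventually_atTop.mp (hLsuper.eventually_ge_atTop (K : ℝ))
  refine ⟨K * max M 1, fun u hu => ?_⟩
  have hKC : 0 ≤ (K : ℝ) * max M 1 := mul_nonneg K.coe_nonneg (by positivity)
  rcases le_or_gt (max M 1) u with hMu | huM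
  · have hu1 : 0 < u := lt_of_lt_of_le one_pos ((le_max_right M 1).trans hMu)
    have := (le_div_iff₀ hu1).mp (hM u ((le_max_left M 1).trans hMu))
    linarith
  · have := mul_le_mul_of_nonneg_left huM.le K.coe_nonneg
    linarith [hLnonneg u hu]

theorem ConvexOn.perspective_add_le {L : ℝ → ℝ} (hL : ConvexOn ℝ (Set.Ici 0) L)
    {a b s t : ℝ} (ha : 0 ≤ a) (hb : 0 ≤ b) (hs : 0 < s) (ht : 0 < t) :
    (s + t) * L ((a + b) / (s + t)) ≤ s * L (a / s) + t * L (b / t) := by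
  have hst : 0 < s + t := add_pos hs ht
  have hconv := hL.2 (x := a / s) (y := b / t) (div_nonneg ha hs.le) (div_nonneg hb ht.le)
    (div_nonneg hs.le hst.le) (div_nonneg ht.le hst.le) (by rw [← add_div, div_self hst.ne'])
  have hmid : (s / (s + t)) • (a / s) + (t / (s + t)) • (b / t) = (a + b) / (s + t) := by
    simp only [smul_eq_mul]
    field_simp
  rw [hmid, smul_eq_mul, smul_eq_mul] at hconv
  calc (s + t) * L ((a + b) / (s + t))
      ≤ (s + t) * (s / (s + t) * L (a / s) + t / (s + t) * L (b / t)) :=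
        mul_le_mul_of_nonneg_left hconv hst.le
    _ = s * L (a / s) + t * L (b / t) := by field_simp

theorem legendreH_le {L : ℝ → ℝ} {w c : ℝ} (h : ∀ v, 0 ≤ v → w * v - L v ≤ c) :
    legendreH L w ≤ c :=
  csSup_le ((Set.nonempty_Ici).image _) (Set.forall_mem_image.mpr h)

/-- At an isolated point `x₀` the limsup is taken over `⊥` and has the junk value `0`,
hence `0 ≤ c`. -/
theorem metricSubgradient_le {X : Type*} [MetricSpace X] {f : X → ℝ} {x₀ : X} {c : ℝ}
    (hc : 0 ≤ c)
    (h : ∀ ε, 0 < ε → ∀ᶠ z in 𝓝[≠] x₀, f x₀ - f z ≤ (c + ε) * dist z x₀) :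
    metricSubgradient f x₀ ≤ c := by
  rcases (𝓝[≠] x₀).eq_or_neBot with hbot | hne
  · simp [metricSubgradient, hbot, limsup_eq, hc]
  refine le_of_forall_pos_le_add fun ε hε => limsup_le_of_le
    (isCoboundedUnder_le_of_le _ fun z => div_nonneg (le_max_right _ 0) dist_nonneg) ?_
  filter_upwards [h ε hε, self_mem_nhdsWithin] with z hz hzx
  rw [div_le_iff₀ (dist_pos.mpr hzx)]
  exact max_le hz (by positivity)

section HopfLax

variable {X : Type*} [MetricSpace X] {L : ℝ → ℝ} {g : X → ℝ}

theorem bddBelow_hopfLax_integrand (hLnonneg : ∀ u, 0 ≤ u → 0 ≤ L u)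
    (hLsuper : Tendsto (fun u => L u / u) atTop atTop) {K : ℝ≥0} (hg : LipschitzWith K g)
    {s : ℝ} (hs : 0 < s) (x : X) :
    BddBelow (Set.range fun y => s * L (dist x y / s) + g y) := by
  obtain ⟨C, hC⟩ := exists_mul_le_add_of_superlinear hLnonneg hLsuper K
  refine ⟨g x - C * s, ?_⟩
  rintro _ ⟨y, rfl⟩
  have hgxy : g x - K * dist x y ≤ g y := by
    have := hg.dist_le_mul x y
    rw [Real.dist_eq] at this
    linarith [(abs_le.mp this).2]
  have hKd : K * dist x y ≤ s * (L (dist x y / s) + C) := by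
    have := mul_le_mul_of_nonneg_left (hC (dist x y / s) (by positivity)) hs.le
    rwa [mul_left_comm, mul_div_cancel₀ _ hs.ne'] at this
  linarith

theorem hopfLaxQ_of_ne_zero {t : ℝ} (ht : t ≠ 0) (x : X) :
    hopfLaxQ L g t x = ⨅ y, (t * L (dist x y / t) + g y) := if_neg ht

theorem hopfLaxQ_add_le (hLmono : MonotoneOn L (Set.Ici 0)) (hLconv : ConvexOn ℝ (Set.Ici 0) L)
    {t h : ℝ} (ht : 0 < t) (hh : 0 < h) {x : X}
    (hbdd : BddBelow (Set.range fun y => (t + h) * L (dist x y / (t + h)) + g y)) (z : X) :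
    hopfLaxQ L g (t + h) x ≤ h * L (dist x z / h) + hopfLaxQ L g t z := by
  have hth : 0 < t + h := add_pos ht hh
  have : Nonempty X := ⟨z⟩
  rw [hopfLaxQ_of_ne_zero hth.ne', hopfLaxQ_of_ne_zero ht.ne', ← sub_le_iff_le_add']
  refine le_ciInf fun y => sub_le_iff_le_add'.mpr ((ciInf_le hbdd y).trans ?_)
  have hmono : L (dist x y / (t + h)) ≤ L ((dist x z + dist z y) / (t + h)) :=
    hLmono (div_nonneg dist_nonneg hth.le) (div_nonneg (by positivity) hth.le)
      (div_le_div_of_nonneg_right (dist_triangle x z y) hth.le)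
  have hpersp := add_comm t h ▸ hLconv.perspective_add_le (dist_nonneg (x := x) (y := z))
    (dist_nonneg (x := z) (y := y)) hh ht
  calc (t + h) * L (dist x y / (t + h)) + g y
      ≤ (t + h) * L ((dist x z + dist z y) / (t + h)) + g y := by gcongr
    _ ≤ h * L (dist x z / h) + (t * L (dist z y / t) + g y) := by linarith

theorem antitoneOn_hopfLaxQ (hL0 : L 0 = 0) (hLmono : MonotoneOn L (Set.Ici 0))
    (hLconv : ConvexOn ℝ (Set.Ici 0) L) {t : ℝ} (ht : 0 < t) {x : X}
    (hbdd : ∀ s, 0 < s → BddBelow (Set.range fun y => s * L (dist x y / s) + g y)) :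
    AntitoneOn (fun s => hopfLaxQ L g s x) (Set.Ici t) := by
  intro r hr s _ hrs
  rcases hrs.eq_or_lt with rfl | hrs
  · rfl
  have hr0 : 0 < r := ht.trans_le hr
  have hs : s = r + (s - r) := by ring
  have := hopfLaxQ_add_le hLmono hLconv hr0 (sub_pos.mpr hrs) (hbdd _ (hs ▸ hr0.trans hrs)) x
  simpa [← hs, hL0] using this

theorem hopfLaxQ_sub_le_of_hasDerivAt (hLmono : MonotoneOn L (Set.Ici 0))
    (hLconv : ConvexOn ℝ (Set.Ici 0) L) {t : ℝ} (ht : 0 < t) {x : X}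
    (hbdd : ∀ s, 0 < s → BddBelow (Set.range fun y => s * L (dist x y / s) + g y))
    {D : ℝ} (hD : HasDerivAt (fun s => hopfLaxQ L g s x) D t) {v : ℝ} (hv : 0 < v)
    {ε : ℝ} (hε : 0 < ε) :
    ∀ᶠ z in 𝓝[≠] x, hopfLaxQ L g t x - hopfLaxQ L g t z ≤ ((L v - D) / v + ε) * dist z x := by
  have htime : Tendsto (fun z => t + dist z x / v) (𝓝[≠] x) (𝓝[>] t) := by
    refine tendsto_nhdsWithin_iff.mpr ⟨?_, ?_⟩
    · have : Continuous fun z => t + dist z x / v := by fun_prop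
      simpa using (this.tendsto x).mono_left nhdsWithin_le_nhds
    · filter_upwards [self_mem_nhdsWithin] with z hz
      exact lt_add_of_pos_right t (div_pos (dist_pos.mpr hz) hv)
  have hslope : ∀ᶠ s in 𝓝[>] t, D - ε * v < slope (fun s => hopfLaxQ L g s x) t s :=
    ((hasDerivAt_iff_tendsto_slope.mp hD).mono_left (nhdsWithin_mono t fun s hs => hs.ne'))
      |>.eventually_const_lt (by linarith [mul_pos hε hv])
  filter_upwards [htime.eventually hslope, self_mem_nhdsWithin] with z hz hzx
  set h := dist z x / v with hh
  have hh0 : 0 < h := div_pos (dist_pos.mpr hzx) hv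
  have hdist : dist z x = h * v := by rw [hh, div_mul_cancel₀ _ hv.ne']
  have hstep := hopfLaxQ_add_le hLmono hLconv ht hh0 (hbdd _ (add_pos ht hh0)) z
  rw [dist_comm, hdist, mul_div_cancel_left₀ _ hh0.ne'] at hstep
  rw [slope_def_field, add_sub_cancel_left, lt_div_iff₀ hh0] at hz
  rw [hdist]
  have : ((L v - D) / v + ε) * (h * v) = h * L v - D * h + ε * v * h := by field_simp
  linarith

end HopfLax

theorem hopfLax_subsolution_general
    {X : Type*} [MetricSpace X]
    (L : ℝ → ℝ) (hL0 : L 0 = 0)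
    (hLnonneg : ∀ u, 0 ≤ u → 0 ≤ L u)
    (hLmono : MonotoneOn L (Set.Ici 0))
    (hLconv : ConvexOn ℝ (Set.Ici 0) L)
    (hLsuper : Tendsto (fun u => L u / u) atTop atTop)
    (g : X → ℝ) (hg : ∃ K : ℝ≥0, LipschitzWith K g)
    (x : X) (t : ℝ) (ht : 0 < t)
    (D : ℝ) (hD : HasDerivAt (fun s => hopfLaxQ L g s x) D t) :
    D + legendreH L (metricSubgradient (fun y => hopfLaxQ L g t y) x) ≤ 0 := by
  obtain ⟨K, hK⟩ := hg
  have hbdd s (hs : 0 < s) := bddBelow_hopfLax_integrand hLnonneg hLsuper hK hs x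
  have hacc : AccPt t (𝓟 (Set.Ici t)) := by
    rw [accPt_principal_iff_nhdsWithin, Set.Ici_sdiff_left]
    infer_instance
  have hD0 : D ≤ 0 := hD.hasDerivWithinAt.nonpos_of_antitoneOn hacc
    (antitoneOn_hopfLaxQ hL0 hLmono hLconv ht hbdd)
  suffices hH : legendreH L (metricSubgradient (fun y => hopfLaxQ L g t y) x) ≤ -D by linarith
  refine legendreH_le fun v hv => ?_
  rcases hv.eq_or_lt with rfl | hv
  · simpa [hL0] using hD0
  have hslope := metricSubgradient_le (div_nonneg (by linarith [hLnonneg v hv.le]) hv.le)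
    fun ε hε => hopfLaxQ_sub_le_of_hasDerivAt hLmono hLconv ht hbdd hD hv hε
  rw [le_div_iff₀ hv] at hslope
  linarith

/-- At every point of differentiability in `t`, the Hopf–Lax semigroup is a
subsolution of the Hamilton–Jacobi equation: `∂_t Q_t g(x) + H(|∇⁻ Q_t g|(x)) ≤ 0`. -/
theorem hopfLax_subsolution
    {X : Type*} [MetricSpace X] [ProperSpace X] [Nonempty X]
    (hgeo : ∀ x y : X, ∀ τ : ℝ, 0 ≤ τ → τ ≤ 1 →
      ∃ z : X, dist x z = τ * dist x y ∧ dist z y = (1 - τ) * dist x y)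
    (L : ℝ → ℝ) (hL0 : L 0 = 0)
    (hLnonneg : ∀ u, 0 ≤ u → 0 ≤ L u)
    (hLmono : MonotoneOn L (Set.Ici 0))
    (hLconv : ConvexOn ℝ (Set.Ici 0) L)
    (hLsuper : Tendsto (fun u => L u / u) atTop atTop)
    (g : X → ℝ) (hg : ∃ K : ℝ≥0, LipschitzWith K g)
    (x : X) (t : ℝ) (ht : 0 < t)
    (D : ℝ) (hD : HasDerivAt (fun s => hopfLaxQ L g s x) D t) :
    D + legendreH L (metricSubgradient (fun y => hopfLaxQ L g t y) x) ≤ 0 :=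
  hopfLax_subsolution_general L hL0 hLnonneg hLmono hLconv hLsuper g hg x t ht D hD
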